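/- The matrix Φ = (1/2)[[φ + iφ⁻¹, 1],[-1, φ - iφ⁻¹]], where φ is the golden ratio, is an element of SU(2) satisfying Φ⁵ = -I. -/
import Mathlib


open Matrix Complex

noncomputable section

/-- The golden ratio φ = (1+√5)/2, as a complex number. -/
def goldenφ : ℂ := (1 + Real.sqrt 5) / 2

/-- The gate Φ = (1/2)[[φ + iφ⁻¹, 1], [-1, φ - iφ⁻¹]]. -/
def Phi : Matrix (Fin 2) (Fin 2) ℂ :=
  (1 / 2 : ℂ) • !![goldenφ + I * goldenφ⁻¹, 1; -1, goldenφ - I * goldenφ⁻¹]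

lemma sqrt5_sq : ((Real.sqrt 5 : ℝ) : ℂ) ^ 2 = 5 := by
  norm_cast
  rw [Real.sq_sqrt] <;> norm_num

lemma golden_inv : goldenφ⁻¹ = (((Real.sqrt 5 : ℝ) : ℂ) - 1) / 2 := by
  rw [inv_eq_of_mul_eq_one_right]
  unfold goldenφ
  linear_combination (1/4 : ℂ) * sqrt5_sq

local notation "s" => ((Real.sqrt 5 : ℝ) : ℂ)

lemma Phi_eq : Phi = !![(1 + s)/4 + (s - 1)/4 * I, 1/2;
    -(1/2), (1 + s)/4 - (s - 1)/4 * I] := by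
  rw [Phi, golden_inv]
  unfold goldenφ
  ext i j
  fin_cases i <;> fin_cases j <;> simp <;> ring

lemma Phi_sq : Phi * Phi = !![(-1 + s)/4 + I/2, (1 + s)/4;
    -((1 + s)/4), (-1 + s)/4 - I/2] := by
  rw [Phi_eq]
  ext i j
  have hI := Complex.I_sq
  have h5 := sqrt5_sq
  fin_cases i <;> fin_cases j <;>
    simp [Matrix.mul_apply, Fin.sum_univ_two]
  · linear_combination (1/16 - s/8 + s^2/16) * hI + (I/8) * h5
  · ring
  · ring
  · linear_combination (1/16 - s/8 + s^2/16) * hI - (I/8) * h5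

lemma Phi_four : (Phi * Phi) * (Phi * Phi) =
    !![(-1 - s)/4 + (-1 + s)/4 * I, 1/2; -(1/2), (-1 - s)/4 + (1 - s)/4 * I] := by
  rw [Phi_sq]
  ext i j
  have hI := Complex.I_sq
  have h5 := sqrt5_sq
  fin_cases i <;> fin_cases j <;>
    simp [Matrix.mul_apply, Fin.sum_univ_two]
  · linear_combination (1/4 : ℂ) * hI
  · linear_combination (1/8 : ℂ) * h5
  · linear_combination (-1/8 : ℂ) * h5
  · linear_combination (1/4 : ℂ) * hI

/-- Φ is an element of SU(2) and Φ⁵ = -I. -/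
theorem Phi_mem_SU2_and_pow_five :
    Phi ∈ Matrix.specialUnitaryGroup (Fin 2) ℂ ∧ Phi ^ 5 = -1 := by
  have hI := Complex.I_sq
  have h5 := sqrt5_sq
  constructor
  · rw [Matrix.mem_specialUnitaryGroup_iff]
    constructor
    · rw [Matrix.mem_unitaryGroup_iff']
      rw [Phi_eq]
      ext i j
      fin_cases i <;> fin_cases j <;>
        simp [Matrix.mul_apply, Fin.sum_univ_two, Matrix.conjTranspose_apply,
          Matrix.one_apply, Complex.conj_ofReal, map_div₀, map_add, map_sub, _root_.map_mul,
          _root_.map_one, map_ofNat, map_neg, Complex.conj_I]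
      · linear_combination (-1/16 + s/8 - s^2/16) * hI + (1/8 : ℂ) * h5
      · ring
      · ring
      · linear_combination (-1/16 + s/8 - s^2/16) * hI + (1/8 : ℂ) * h5
    · rw [Phi_eq, Matrix.det_fin_two_of]
      linear_combination (-1/16 + s/8 - s^2/16) * hI + (1/8 : ℂ) * h5
  · have h : Phi ^ 5 = ((Phi * Phi) * (Phi * Phi)) * Phi := by
      rw [pow_succ, pow_succ, pow_succ, pow_succ, pow_one, mul_assoc (Phi*Phi)]
    rw [h, Phi_four, Phi_eq]
    ext i j
    fin_cases i <;> fin_cases j <;>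
      simp [Matrix.mul_apply, Fin.sum_univ_two, Matrix.one_apply]
    · linear_combination (1/16 - s/8 + s^2/16) * hI - (1/8 : ℂ) * h5
    · ring
    · ring
    · linear_combination (1/16 - s/8 + s^2/16) * hI - (1/8 : ℂ) * h5

end
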